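/- arXiv:1911.09444 — 4 statements merged into one kernel-verified Lean document; each statement's English description precedes it below -/
import Mathlib

section
/- Let R be a finite group, φ an automorphism of R whose fixed-point subgroup A = C_R(φ) has index 2 in R, and suppose x ∈ R \ A satisfies x^φ = x⁻¹. Then x² is central in R and x⁴ = 1. -/
/-- If `φ` is an automorphism of a finite group `R` whose fixed-point subgroup `A` has
index 2, and `x ∈ R \ A` satisfies `φ x = x⁻¹`, then `x²` is central and `x⁴ = 1`. -/
theorem sq_central_and_fourth_power_one (R : Type*) [Group R] [Fintype R]
    (φ : R ≃* R) (A : Subgroup R) (hA : ∀ a : R, a ∈ A ↔ φ a = a)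
    (hidx : A.index = 2) (x : R) (hx : x ∉ A) (hxφ : φ x = x⁻¹) :
    x ^ 2 ∈ Subgroup.center R ∧ x ^ 4 = 1 := by
  have hx2 : x ^ 2 ∈ A := Subgroup.sq_mem_of_index_two hidx x
  have hx4 : x ^ 4 = 1 := by
    have h := (hA (x ^ 2)).mp hx2
    rw [map_pow, hxφ] at h
    rw [inv_pow] at h
    have h2 : x ^ 2 * x ^ 2 = 1 := by
      nth_rewrite 2 [← h]
      exact mul_inv_cancel _
    rw [show (4:ℕ) = 2 + 2 from rfl, pow_add, h2]
  -- x² commutes with every element of A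
  have hcomm : ∀ a ∈ A, a * x ^ 2 = x ^ 2 * a := by
    intro a ha
    have hconj : x * a * x⁻¹ ∈ A := by
      rw [Subgroup.mul_mem_iff_of_index_two hidx,
        Subgroup.mul_mem_iff_of_index_two hidx]
      simp [hx, ha, Subgroup.inv_mem_iff]
    have h := (hA _).mp hconj
    simp only [map_mul, map_inv, hxφ, (hA a).mp ha, inv_inv] at h
    -- h : x⁻¹ * a * x = x * a * x⁻¹
    calc a * x ^ 2 = x * (x⁻¹ * a * x) * x := by rw [pow_two]; group
    _ = x * (x * a * x⁻¹) * x := by rw [h]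
    _ = x ^ 2 * a := by rw [pow_two]; group
  refine ⟨Subgroup.mem_center_iff.mpr fun r => ?_, hx4⟩
  by_cases hr : r ∈ A
  · exact hcomm r hr
  · have hrx : r * x⁻¹ ∈ A := by
      rw [Subgroup.mul_mem_iff_of_index_two hidx]
      simp [hr, hx, Subgroup.inv_mem_iff]
    have h := hcomm _ hrx
    calc r * x ^ 2 = (r * x⁻¹) * x ^ 2 * x := by rw [pow_two]; group
    _ = x ^ 2 * (r * x⁻¹) * x := by rw [h]
    _ = x ^ 2 * r := by rw [pow_two]; group
end

section
/- Let R be a finite group and φ an automorphism of R of odd prime order p. Let ι : R → R be the inversion map, and suppose R is abelian of exponent greater than 2 so that H = ⟨ι, φ⟩ is a cyclic group of order 2p acting on R. Then the number of orbits of H on R is at most (|R| + |I(R)|)/2 − |R|·(p−1)/(4p), where I(R) = {x : x² = 1}. -/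
/-!
Burnside's lemma, applied to `⟨ι⟩ × ⟨φ⟩`, which maps onto `H`. The identity fixes `|R|` points.
Each of the `p - 1` nontrivial powers of `φ` fixes a proper subgroup, hence at most `|R| / 2`
points. Each `ι φᵏ` fixes only elements of `I(R)`: `φᵏ x = x⁻¹` forces `φ²ᵏ x = x`, hence
`φᵏ x = x` because `φ` has odd order, and then `x = x⁻¹`.
-/

open MulAction Subgroup

theorem MulAction.card_orbitRel_range_mul_card {G M α : Type*} [Group G] [Group M]
    [MulAction M α] [Fintype G] [Finite α] (f : G →* M) :
    Nat.card (orbitRel.Quotient f.range α) * Nat.card G =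
      ∑ g : G, Nat.card (fixedBy α (f g)) := by
  classical
  let := MulAction.compHom α f
  have horbit : orbitRel G α = orbitRel f.range α := by
    ext x y
    simp only [orbitRel_apply, mem_orbit_iff]
    exact ⟨fun ⟨g, hg⟩ ↦ ⟨⟨f g, g, rfl⟩, hg⟩, fun ⟨⟨_, g, rfl⟩, hg⟩ ↦ ⟨g, hg⟩⟩
  have := Fintype.ofFinite α
  have := Fintype.ofFinite (orbitRel.Quotient G α)
  rw [orbitRel.Quotient, ← horbit, Nat.card_eq_fintype_card, Nat.card_eq_fintype_card,
    ← sum_card_fixedBy_eq_card_orbits_mul_card_group G α]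
  simp only [Nat.card_eq_fintype_card]
  rfl

theorem MulAction.fixedBy_sq_subset_of_odd_orderOf {G α : Type*} [Group G] [MulAction G α]
    {g : G} (hg : Odd (orderOf g)) : fixedBy α (g ^ 2) ⊆ fixedBy α g := by
  obtain ⟨k, hk⟩ := hg
  have hpow : (g ^ 2) ^ ((k + 1 : ℕ) : ℤ) = g := by
    rw [zpow_natCast, ← pow_mul, show 2 * (k + 1) = orderOf g + 1 by omega, pow_succ,
      pow_orderOf_eq_one, one_mul]
  calc fixedBy α (g ^ 2) ⊆ fixedBy α ((g ^ 2) ^ ((k + 1 : ℕ) : ℤ)) :=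
        fixedBy_subset_fixedBy_zpow α _ _
    _ = fixedBy α g := by rw [hpow]

theorem Subgroup.sum_zpowers_of_orderOf_eq_two {G M : Type*} [Group G] [AddCommMonoid M]
    {g : G} (hg : orderOf g = 2) [Fintype (zpowers g)] (F : zpowers g → M) :
    ∑ a, F a = F 1 + F ⟨g, mem_zpowers g⟩ := by
  classical
  refine Fintype.sum_eq_add _ _ (fun h ↦ ?_) fun ⟨a, ha⟩ hne ↦ ?_
  · rw [orderOf_eq_one_iff.mpr (congrArg Subtype.val h).symm] at hg
    omega
  · have hfin : IsOfFinOrder g := orderOf_pos_iff.mp (by omega)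
    rw [hfin.mem_zpowers_iff_mem_range_orderOf, hg] at ha
    obtain ⟨k, hk, rfl⟩ := Finset.mem_image.mp ha
    have : k < 2 := Finset.mem_range.mp hk
    interval_cases k <;> simp at hne

namespace MulAut

theorem fixedBy_toPerm {R : Type*} [Group R] (ψ : MulAut R) :
    fixedBy R (toPerm R ψ) = fixedBy R ψ :=
  rfl

theorem two_mul_card_fixedBy_le {R : Type*} [Group R] [Finite R] {ψ : MulAut R} (hψ : ψ ≠ 1) :
    2 * Nat.card (fixedBy R ψ) ≤ Nat.card R := by
  let C := MonoidHom.eqLocus ψ.toMonoidHom (MonoidHom.id R)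
  have hC : C ≠ ⊤ := fun h ↦ hψ <| MulEquiv.ext fun x ↦ (h ▸ mem_top x : x ∈ C)
  have hindex : 2 ≤ C.index := by
    have := C.index_ne_zero_of_finite
    have := mt index_eq_one.mp hC
    omega
  calc 2 * Nat.card (fixedBy R ψ) = 2 * Nat.card C := rfl
    _ ≤ C.index * Nat.card C := Nat.mul_le_mul_right _ hindex
    _ = Nat.card R := by rw [mul_comm, card_mul_index]

variable {R : Type*} [CommGroup R]

theorem fixedBy_inv_mul_subset {ψ : MulAut R} (hψ : Odd (orderOf ψ)) :
    fixedBy R (MulEquiv.inv R * ψ) ⊆ {x | x ^ 2 = 1} := by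
  intro x hx
  have hinv : ψ x = x⁻¹ := inv_eq_iff_eq_inv.mp hx
  have hfix : ψ x = x := fixedBy_sq_subset_of_odd_orderOf hψ <| by
    change ψ (ψ x) = x
    rw [hinv, map_inv, hinv, inv_inv]
  rw [Set.mem_ofPred_eq, sq, ← inv_eq_iff_mul_eq_one, ← hinv, hfix]

theorem commute_inv (ψ : MulAut R) : Commute (MulEquiv.inv R : MulAut R) ψ :=
  MulEquiv.ext fun x ↦ (map_inv ψ x).symm

theorem orderOf_inv_eq_two (h : 2 < Monoid.exponent R) :
    orderOf (MulEquiv.inv R : MulAut R) = 2 := by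
  refine orderOf_eq_prime (MulEquiv.ext inv_inv) fun hι ↦ h.not_ge ?_
  refine Nat.le_of_dvd two_pos (Monoid.exponent_dvd_of_forall_pow_eq_one fun x ↦ ?_)
  rw [sq, ← inv_eq_iff_mul_eq_one]
  exact MulEquiv.congr_fun hι x

variable [Finite R] (K : Subgroup (MulAut R)) [Fintype K]

theorem two_mul_sum_card_fixedBy_le :
    2 * ∑ ψ : K, Nat.card (fixedBy R (ψ : MulAut R)) ≤ (Nat.card K + 1) * Nat.card R := by
  classical
  calc 2 * ∑ ψ : K, Nat.card (fixedBy R (ψ : MulAut R))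
      ≤ ∑ ψ : K, (Nat.card R + if ψ = 1 then Nat.card R else 0) := by
        rw [Finset.mul_sum]
        refine Finset.sum_le_sum fun ψ _ ↦ ?_
        split_ifs with hψ
        · have : Nat.card (fixedBy R (ψ : MulAut R)) ≤ Nat.card R := Finite.card_subtype_le _
          omega
        · exact (two_mul_card_fixedBy_le (by simpa using hψ)).trans (Nat.le_add_right _ _)
    _ = (Nat.card K + 1) * Nat.card R := by
        rw [Finset.sum_add_distrib, Finset.sum_ite_eq', if_pos (Finset.mem_univ _),
          Finset.sum_const, Finset.card_univ, smul_eq_mul, ← Nat.card_eq_fintype_card]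
        ring

theorem sum_card_fixedBy_inv_mul_le (hK : Odd (Nat.card K)) :
    ∑ ψ : K, Nat.card (fixedBy R (MulEquiv.inv R * ψ)) ≤
      Nat.card K * Nat.card {x : R // x ^ 2 = 1} := by
  rw [Nat.card_eq_fintype_card, ← smul_eq_mul, ← Finset.card_univ]
  refine Finset.sum_le_card_nsmul _ _ _ fun ψ _ ↦ Nat.card_mono (Set.toFinite _) ?_
  exact fixedBy_inv_mul_subset (hK.of_dvd_nat (K.orderOf_dvd_natCard ψ.2))

theorem card_orbitRel_map_zpowers_inv_sup_mul_le (hK : Odd (Nat.card K))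
    (hR : 2 < Monoid.exponent R) :
    Nat.card (orbitRel.Quotient
        ((zpowers (MulEquiv.inv R : MulAut R) ⊔ K).map (toPerm R)) R) * (4 * Nat.card K) ≤
      (Nat.card K + 1) * Nat.card R + 2 * Nat.card K * Nat.card {x : R // x ^ 2 = 1} := by
  classical
  have comm : ∀ a ψ,
      Commute ((zpowers (MulEquiv.inv R : MulAut R)).subtype a) (K.subtype ψ) := by
    rintro ⟨_, k, rfl⟩ ψ
    exact (commute_inv (ψ : MulAut R)).zpow_left k
  have := Fintype.ofFinite (zpowers (MulEquiv.inv R : MulAut R))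
  let f := (toPerm R).comp (MonoidHom.noncommCoprod _ _ comm)
  have hf : f.range = (zpowers (MulEquiv.inv R : MulAut R) ⊔ K).map (toPerm R) := by
    rw [MonoidHom.range_comp, MonoidHom.noncommCoprod_range, range_subtype, range_subtype]
  have burnside := card_orbitRel_range_mul_card (α := R) f
  rw [hf, Nat.card_prod, Nat.card_zpowers, orderOf_inv_eq_two hR, Fintype.sum_prod_type,
    sum_zpowers_of_orderOf_eq_two (orderOf_inv_eq_two hR)] at burnside
  simp only [f, MonoidHom.comp_apply, MonoidHom.noncommCoprod_apply, map_one, one_mul,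
    coe_subtype, fixedBy_toPerm] at burnside
  linarith [two_mul_sum_card_fixedBy_le K, sum_card_fixedBy_inv_mul_le K hK]

end MulAut

theorem orbit_count_odd_prime_general (R : Type*) [CommGroup R] [Fintype R]
    (hexp : 2 < Monoid.exponent R) (p : ℕ) (hodd : Odd p)
    (φ : MulAut R) (hφ : orderOf φ = p)
    (H : Subgroup (Equiv.Perm R))
    (hH : H = Subgroup.closure {Equiv.inv R, MulEquiv.toEquiv (φ : R ≃* R)}) :
    (Nat.card (MulAction.orbitRel.Quotient H R) : ℚ) ≤
      ((Fintype.card R : ℚ) + (Nat.card {x : R // x ^ 2 = 1} : ℚ)) / 2 -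
        (Fintype.card R : ℚ) * ((p : ℚ) - 1) / (4 * p) := by
  have := Fintype.ofFinite (zpowers φ)
  have hH' : H = (zpowers (MulEquiv.inv R : MulAut R) ⊔ zpowers φ).map (MulAut.toPerm R) := by
    rw [hH, zpowers_eq_closure, zpowers_eq_closure, ← Subgroup.closure_union,
      MonoidHom.map_closure, Set.image_union, Set.image_singleton, Set.image_singleton,
      ← Set.insert_eq]
    rfl
  have hcard : Nat.card (zpowers φ) = p := by rw [Nat.card_zpowers, hφ]
  have key := MulAut.card_orbitRel_map_zpowers_inv_sup_mul_le (zpowers φ) (hcard ▸ hodd) hexp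
  rw [← hH', hcard, Nat.card_eq_fintype_card (α := R)] at key
  have hp_pos : (0 : ℚ) < p := by exact_mod_cast hodd.pos
  rw [show ((Fintype.card R : ℚ) + Nat.card {x : R // x ^ 2 = 1}) / 2 -
      Fintype.card R * ((p : ℚ) - 1) / (4 * p) =
      ((p + 1) * Fintype.card R + 2 * p * Nat.card {x : R // x ^ 2 = 1}) / (4 * p) by
    field_simp; ring, le_div_iff₀ (by positivity)]
  exact_mod_cast key

/-- For a finite abelian group `R` of exponent greater than 2 and an automorphism `φ`
of odd prime order `p`, the number of orbits of `H = ⟨ι, φ⟩ ≤ Sym(R)` on `R` is at most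
`(|R| + |I(R)|)/2 − |R|(p−1)/(4p)`. -/
theorem orbit_count_odd_prime (R : Type*) [CommGroup R] [Fintype R]
    (hexp : 2 < Monoid.exponent R) (p : ℕ) (hp : p.Prime) (hodd : Odd p)
    (φ : MulAut R) (hφ : orderOf φ = p)
    (H : Subgroup (Equiv.Perm R))
    (hH : H = Subgroup.closure {Equiv.inv R, MulEquiv.toEquiv (φ : R ≃* R)}) :
    (Nat.card (MulAction.orbitRel.Quotient H R) : ℚ) ≤
      ((Fintype.card R : ℚ) + (Nat.card {x : R // x ^ 2 = 1} : ℚ)) / 2 -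
        (Fintype.card R : ℚ) * ((p : ℚ) - 1) / (4 * p) :=
  orbit_count_odd_prime_general R hexp p hodd φ hφ H hH
end

section
/- Let R be a finite group, φ ∈ Aut(R) with A := C_R(φ) of index 3 in R and A normal in R, and suppose there exists x ∈ R \ A with x^φ = x⁻¹ and x of odd order with R = A ∪ Ax ∪ Ax⁻¹. Then x is central in R. -/
/-!
For `a ∈ A`, normality gives `x a x⁻¹ ∈ A`, so it is fixed by `φ`; but `φ` sends it to
`x⁻¹ a x`. Hence `x²` commutes with `A` and with `x`, so with every `a x^{±1}`, i.e. it is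
central. As `x` has odd order it is a power of `x²`, hence central too.
-/

theorem mem_of_sq_mem_of_odd_orderOf {M S : Type*} [Monoid M] [SetLike S M]
    [SubmonoidClass S M] {s : S} {x : M} (hodd : Odd (orderOf x)) (hsq : x ^ 2 ∈ s) :
    x ∈ s := by
  obtain ⟨m, hm⟩ := exists_pow_eq_self_of_coprime (Nat.coprime_two_left.mpr hodd)
  exact hm ▸ pow_mem hsq m

theorem commute_sq_of_map_conj_eq {G F : Type*} [Group G] [FunLike F G G]
    [MonoidHomClass F G G] (f : F) {x a : G} (hx : f x = x⁻¹) (ha : f a = a)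
    (hconj : f (x * a * x⁻¹) = x * a * x⁻¹) : Commute (x ^ 2) a := by
  have key : x⁻¹ * a * x = x * a * x⁻¹ := by
    rw [← hconj, map_mul, map_mul, map_inv, hx, ha, inv_inv]
  calc x ^ 2 * a = x * (x * a * x⁻¹) * x := by rw [sq]; group
    _ = x * (x⁻¹ * a * x) * x := by rw [key]
    _ = a * x ^ 2 := by rw [sq]; group

theorem central_element_index_three_general (R : Type*) [Group R]
    (φ : R ≃* R) (A : Subgroup R) (hA : ∀ a : R, a ∈ A ↔ φ a = a)
    (hnorm : A.Normal)
    (x : R) (hxφ : φ x = x⁻¹) (hodd : Odd (orderOf x))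
    (hcosets : ∀ g : R, g ∈ A ∨ (∃ a ∈ A, g = a * x) ∨ ∃ a ∈ A, g = a * x⁻¹) :
    x ∈ Subgroup.center R := by
  have hcommA : ∀ a ∈ A, Commute a (x ^ 2) := fun a ha =>
    (commute_sq_of_map_conj_eq φ hxφ ((hA a).mp ha)
      ((hA _).mp (hnorm.conj_mem a ha x))).symm
  have hcommx : Commute x (x ^ 2) := Commute.self_pow x 2
  have hsq : x ^ 2 ∈ Subgroup.center R := by
    refine Subgroup.mem_center_iff.mpr fun g => ?_
    rcases hcosets g with hg | ⟨a, ha, rfl⟩ | ⟨a, ha, rfl⟩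
    · exact hcommA g hg
    · exact (hcommA a ha).mul_left hcommx
    · exact (hcommA a ha).mul_left hcommx.inv_left
  exact mem_of_sq_mem_of_odd_orderOf hodd hsq

/-- If `A = C_R(φ)` is normal of index 3 in the finite group `R`, `x ∈ R \ A` has odd
order, `φ x = x⁻¹`, and `R = A ∪ Ax ∪ Ax⁻¹`, then `x` is central in `R`. -/
theorem central_element_index_three (R : Type*) [Group R] [Fintype R]
    (φ : R ≃* R) (A : Subgroup R) (hA : ∀ a : R, a ∈ A ↔ φ a = a)
    (hnorm : A.Normal) (hidx : A.index = 3)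
    (x : R) (hx : x ∉ A) (hxφ : φ x = x⁻¹) (hodd : Odd (orderOf x))
    (hcosets : ∀ g : R, g ∈ A ∨ (∃ a ∈ A, g = a * x) ∨ ∃ a ∈ A, g = a * x⁻¹) :
    x ∈ Subgroup.center R :=
  central_element_index_three_general R φ A hA hnorm x hxφ hodd hcosets
end

section
/- Let R be a finite group with a central element x of odd order such that R = A ∪ Ax ∪ Ax⁻¹ for A = C_R(φ) with φ ∈ Aut(R) satisfying a^φ = a for a ∈ A and x^φ = x⁻¹. Then {g ∈ R : g^φ = g⁻¹} = I(A) ∪ I(A)x ∪ I(A)x⁻¹, where I(A) = {a ∈ A : a² = 1}. -/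
/-- With `A = C_R(φ)` of index 3, `x` central of odd order, `φ x = x⁻¹` and
`R = A ∪ Ax ∪ Ax⁻¹`, the inverted set `{g : φ g = g⁻¹}` equals
`I(A) ∪ I(A)x ∪ I(A)x⁻¹`. -/
theorem inverted_set_index_three (R : Type*) [Group R] [Fintype R]
    (φ : R ≃* R) (A : Subgroup R) (hA : ∀ a : R, a ∈ A ↔ φ a = a)
    (hidx : A.index = 3) (x : R) (hx : x ∉ A)
    (hcentral : x ∈ Subgroup.center R) (hxφ : φ x = x⁻¹) (hodd : Odd (orderOf x))
    (hcosets : ∀ g : R, g ∈ A ∨ (∃ a ∈ A, g = a * x) ∨ ∃ a ∈ A, g = a * x⁻¹) :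
    {g : R | φ g = g⁻¹} =
      {a : R | a ∈ A ∧ a ^ 2 = 1} ∪
        (fun a => a * x) '' {a : R | a ∈ A ∧ a ^ 2 = 1} ∪
        (fun a => a * x⁻¹) '' {a : R | a ∈ A ∧ a ^ 2 = 1} := by
  have hc : ∀ g : R, Commute g x := fun g => Subgroup.mem_center_iff.mp hcentral g
  have hcomm : ∀ g : R, g * x = x * g := fun g => (hc g).eq
  have hcomm' : ∀ g : R, g * x⁻¹ = x⁻¹ * g := fun g => ((hc g).inv_right).eq
  ext g
  simp only [Set.mem_setOf_eq, Set.mem_union, Set.mem_image, Set.mem_setOf_eq]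
  constructor
  · intro h
    rcases hcosets g with hg | ⟨a, ha, rfl⟩ | ⟨a, ha, rfl⟩
    · left; left
      refine ⟨hg, ?_⟩
      rw [(hA g).mp hg] at h
      rw [pow_two]
      nth_rewrite 2 [h]
      exact mul_inv_cancel g
    · have ha' := (hA a).mp ha
      rw [map_mul, ha', hxφ, mul_inv_rev, ← hcomm' a⁻¹] at h
      have ha2 : a = a⁻¹ := mul_right_cancel h
      left; right
      exact ⟨a, ⟨ha, by rw [pow_two]; nth_rewrite 2 [ha2]; exact mul_inv_cancel a⟩, rfl⟩
    · have ha' := (hA a).mp ha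
      rw [map_mul, ha', map_inv, hxφ, inv_inv, mul_inv_rev, inv_inv, ← hcomm a⁻¹] at h
      have ha2 : a = a⁻¹ := mul_right_cancel h
      right
      exact ⟨a, ⟨ha, by rw [pow_two]; nth_rewrite 2 [ha2]; exact mul_inv_cancel a⟩, rfl⟩
  · rintro ((⟨hg, hg2⟩ | ⟨a, ⟨ha, ha2⟩, rfl⟩) | ⟨a, ⟨ha, ha2⟩, rfl⟩)
    · rw [(hA g).mp hg]
      rw [pow_two] at hg2
      exact eq_inv_of_mul_eq_one_left hg2
    · have ha2' : a⁻¹ = a := by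
        rw [pow_two] at ha2
        exact inv_eq_of_mul_eq_one_left ha2
      rw [map_mul, (hA a).mp ha, hxφ, mul_inv_rev, ha2', ← hcomm' a]
    · have ha2' : a⁻¹ = a := by
        rw [pow_two] at ha2
        exact inv_eq_of_mul_eq_one_left ha2
      rw [map_mul, (hA a).mp ha, map_inv, hxφ, inv_inv, mul_inv_rev, inv_inv, ha2', ← hcomm a]
end
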